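/- Let g be a real Lie algebra and a : I → g* absolutely continuous with a'(t) = −ad*(u(t))(a(t)) for a measurable bounded control u : I → g. Then for any continuous asymmetric norm F on g with dual F* on g*, if u(t) maximizes a(t) on the unit sphere S_F for a.e. t, the function t ↦ F*(a(t)) = a(t)(u(t)) is constant on I. -/

import Mathlib

open MeasureTheory

/-- An asymmetric norm on a real vector space: nonnegative, vanishing only at `0`,
positively homogeneous and subadditive. -/
def IsAsymNorm {V : Type*} [AddCommGroup V] [Module ℝ V] (F : V → ℝ) : Prop :=
  (∀ y, 0 ≤ F y) ∧ (∀ y, F y = 0 ↔ y = 0) ∧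
  (∀ (c : ℝ) (y : V), 0 < c → F (c • y) = c * F y) ∧
  (∀ y w, F (y + w) ≤ F y + F w)

/-!
Let `h = F* ∘ a`. By the Lebesgue differentiation theorem each coordinate `t ↦ a t x` has
derivative `-a t ⁅u t, x⁆` almost everywhere, and `h` is absolutely continuous because `F*` is
Lipschitz in the coordinates of its argument. For almost every `t`, the function
`s ↦ a s (u t)` stays below `h` and touches it at `t`, so `h' t` is its derivative
`-a t ⁅u t, u t⁆ = 0`. An absolutely continuous function whose derivative vanishes almost
everywhere is constant.
-/

open Set Filter Topology

def IsDualNorm {V : Type*} [AddCommGroup V] [Module ℝ V] (F : V → ℝ)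
    (Fstar : Module.Dual ℝ V → ℝ) : Prop :=
  ∀ ξ, IsGreatest {r | ∃ v, F v ≤ 1 ∧ ξ v = r} (Fstar ξ)

theorem Module.Basis.dual_apply_eq_sum_coord_mul {R M ι : Type*} [CommSemiring R]
    [AddCommMonoid M] [Module R M] [Fintype ι] (b : Module.Basis ι R M) (ξ : Module.Dual R M)
    (v : M) : ξ v = ∑ i, b.coord i v * ξ (b i) := by
  conv_lhs => rw [← b.sum_repr v]
  simp only [map_sum, map_smul, smul_eq_mul, Module.Basis.coord_apply]

theorem forall_or_forall_of_sub_closed {G : Type*} [AddCommGroup G] {P Q : G → Prop}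
    (hP : ∀ x y, P x → P y → P (x - y)) (hQ : ∀ x y, Q x → Q y → Q (x - y))
    (h : ∀ x, P x ∨ Q x) : (∀ x, P x) ∨ ∀ x, Q x := by
  by_contra! ⟨⟨x, hx⟩, ⟨y, hy⟩⟩
  rcases h (x + y) with hxy | hxy
  · exact hx (by simpa using hP _ _ hxy ((h y).resolve_right hy))
  · exact hy (by simpa using hQ _ _ hxy ((h x).resolve_left hx))

namespace IsAsymNorm

variable {V : Type*} [AddCommGroup V] [Module ℝ V] {F : V → ℝ}

theorem map_zero (hF : IsAsymNorm F) : F 0 = 0 := (hF.2.1 0).2 rfl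

theorem pos (hF : IsAsymNorm F) {v : V} (hv : v ≠ 0) : 0 < F v :=
  (hF.1 v).lt_of_ne' fun h => hv ((hF.2.1 v).1 h)

theorem map_inv_smul_self (hF : IsAsymNorm F) {v : V} (hv : v ≠ 0) :
    F ((F v)⁻¹ • v) = 1 := by
  rw [hF.2.2.1 _ _ (inv_pos.2 (hF.pos hv)), inv_mul_cancel₀ (hF.pos hv).ne']

theorem apply_le_mul_of_forall_eq_one (hF : IsAsymNorm F) {ξ : Module.Dual ℝ V} {c : ℝ}
    (h : ∀ w, F w = 1 → ξ w ≤ c) (v : V) : ξ v ≤ c * F v := by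
  rcases eq_or_ne v 0 with rfl | hv
  · simp [hF.map_zero]
  · have h₁ := h _ (hF.map_inv_smul_self hv)
    rwa [map_smul, smul_eq_mul, inv_mul_le_iff₀ (hF.pos hv), mul_comm] at h₁

variable {Fstar : Module.Dual ℝ V → ℝ}

theorem apply_le_dualNorm_mul (hF : IsAsymNorm F) (hFstar : IsDualNorm F Fstar)
    (ξ : Module.Dual ℝ V) (v : V) : ξ v ≤ Fstar ξ * F v :=
  hF.apply_le_mul_of_forall_eq_one (fun w hw => (hFstar ξ).2 ⟨w, hw.le, rfl⟩) v

theorem dualNorm_nonneg (hF : IsAsymNorm F) (hFstar : IsDualNorm F Fstar)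
    (ξ : Module.Dual ℝ V) : 0 ≤ Fstar ξ :=
  (hFstar ξ).2 ⟨0, hF.map_zero.le.trans zero_le_one, ξ.map_zero⟩

theorem abs_apply_le (hF : IsAsymNorm F) (hFstar : IsDualNorm F Fstar)
    (ξ : Module.Dual ℝ V) (v : V) : |ξ v| ≤ (Fstar ξ + Fstar (-ξ)) * F v := by
  have h₁ := hF.apply_le_dualNorm_mul hFstar ξ v
  have h₂ := hF.apply_le_dualNorm_mul hFstar (-ξ) v
  have := mul_nonneg (hF.dualNorm_nonneg hFstar ξ) (hF.1 v)
  have := mul_nonneg (hF.dualNorm_nonneg hFstar (-ξ)) (hF.1 v)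
  rw [LinearMap.neg_apply] at h₂
  rw [abs_le]
  constructor <;> linarith

theorem abs_apply_le_sum_basis (hF : IsAsymNorm F) (hFstar : IsDualNorm F Fstar)
    {ι : Type*} [Fintype ι] (b : Module.Basis ι ℝ V) (ξ : Module.Dual ℝ V) (v : V) :
    |ξ v| ≤ F v * ∑ i, (Fstar (b.coord i) + Fstar (-b.coord i)) * |ξ (b i)| := by
  calc |ξ v| = |∑ i, b.coord i v * ξ (b i)| := by rw [b.dual_apply_eq_sum_coord_mul]
    _ ≤ ∑ i, |b.coord i v| * |ξ (b i)| := by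
        simpa only [abs_mul] using Finset.abs_sum_le_sum_abs (fun i => b.coord i v * ξ (b i)) _
    _ ≤ ∑ i, (Fstar (b.coord i) + Fstar (-b.coord i)) * F v * |ξ (b i)| := by
        gcongr with i
        exact hF.abs_apply_le hFstar _ v
    _ = F v * ∑ i, (Fstar (b.coord i) + Fstar (-b.coord i)) * |ξ (b i)| := by
        rw [Finset.mul_sum]
        exact Finset.sum_congr rfl fun i _ => by ring

theorem dualNorm_sub_le_sum_basis (hF : IsAsymNorm F) (hFstar : IsDualNorm F Fstar)
    {ι : Type*} [Fintype ι] (b : Module.Basis ι ℝ V) (ξ η : Module.Dual ℝ V) :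
    Fstar ξ - Fstar η ≤
      ∑ i, (Fstar (b.coord i) + Fstar (-b.coord i)) * |ξ (b i) - η (b i)| := by
  obtain ⟨⟨v, hv, hξv⟩, -⟩ := hFstar ξ
  have hsum : 0 ≤ ∑ i, (Fstar (b.coord i) + Fstar (-b.coord i)) * |ξ (b i) - η (b i)| :=
    Finset.sum_nonneg fun i _ => mul_nonneg
      (add_nonneg (hF.dualNorm_nonneg hFstar _) (hF.dualNorm_nonneg hFstar _)) (abs_nonneg _)
  calc Fstar ξ - Fstar η ≤ (ξ - η) v := by
        rw [LinearMap.sub_apply, hξv]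
        exact sub_le_sub_left ((hFstar η).2 ⟨v, hv, rfl⟩) _
    _ ≤ |(ξ - η) v| := le_abs_self _
    _ ≤ F v * ∑ i, (Fstar (b.coord i) + Fstar (-b.coord i)) * |ξ (b i) - η (b i)| :=
        hF.abs_apply_le_sum_basis hFstar b _ v
    _ ≤ _ := mul_le_of_le_one_left hsum hv

theorem dualNorm_eq_apply_of_isMax (hF : IsAsymNorm F) (hFstar : IsDualNorm F Fstar)
    {ξ : Module.Dual ℝ V} {u : V} (hu : F u = 1) (hmax : ∀ v, F v = 1 → ξ v ≤ ξ u) :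
    Fstar ξ = ξ u := by
  have hle : ∀ v, ξ v ≤ ξ u * F v := hF.apply_le_mul_of_forall_eq_one hmax
  have hu₀ : 0 ≤ ξ u := by
    have := hle (-u)
    rw [map_neg] at this
    nlinarith [hF.1 (-u)]
  refine (hFstar ξ).unique ⟨⟨u, hu.le, rfl⟩, ?_⟩
  rintro _ ⟨v, hv, rfl⟩
  exact (hle v).trans (mul_le_of_le_one_right hu₀ hv)

end IsAsymNorm

theorem uIcc_mem_nhds {α : Type*} [LinearOrder α] [TopologicalSpace α] [OrderClosedTopology α]
    {a b t : α} (ht : t ∈ uIcc a b) (ha : t ≠ a) (hb : t ≠ b) : uIcc a b ∈ 𝓝 t := by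
  rcases le_total a b with hab | hab
  · rw [uIcc_of_le hab] at ht ⊢
    exact Icc_mem_nhds (ht.1.lt_of_ne' ha) (ht.2.lt_of_ne hb)
  · rw [uIcc_of_ge hab] at ht ⊢
    exact Icc_mem_nhds (ht.1.lt_of_ne' hb) (ht.2.lt_of_ne ha)

theorem DifferentiableAt.hasDerivAt_of_eventually_le {h φ : ℝ → ℝ} {t φ' : ℝ}
    (hh : DifferentiableAt ℝ h t) (hφ : HasDerivAt φ φ' t) (hle : ∀ᶠ s in 𝓝 t, φ s ≤ h s)
    (heq : φ t = h t) : HasDerivAt h φ' t := by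
  have hmin : IsLocalMin (h - φ) t := by
    filter_upwards [hle] with s hs
    simp only [Pi.sub_apply, heq, sub_self, sub_nonneg, hs]
  have := hmin.hasDerivAt_eq_zero (hh.hasDerivAt.sub hφ)
  rw [← sub_eq_zero.1 this]
  exact hh.hasDerivAt

theorem AbsolutelyContinuousOnInterval.of_dist_le_sum {X Y ι : Type*} [PseudoMetricSpace X]
    [PseudoMetricSpace Y] (s : Finset ι) {f : ι → ℝ → Y} {h : ℝ → X} {a b : ℝ}
    (hf : ∀ i ∈ s, AbsolutelyContinuousOnInterval (f i) a b)
    (hh : ∀ x ∈ uIcc a b, ∀ y ∈ uIcc a b, dist (h x) (h y) ≤ ∑ i ∈ s, dist (f i x) (f i y)) :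
    AbsolutelyContinuousOnInterval h a b := by
  have hsum := tendsto_finsetSum s hf
  rw [Finset.sum_const_zero] at hsum
  refine squeeze_zero' (Eventually.of_forall fun E => Finset.sum_nonneg fun k _ => dist_nonneg)
    ?_ hsum
  filter_upwards [mem_inf_of_right (mem_principal_self _)] with E hE
  rw [Finset.sum_comm]
  exact Finset.sum_le_sum fun k hk => hh _ (hE.1 k hk).1 _ (hE.1 k hk).2

section Primitive

variable {E : Type*} [NormedAddCommGroup E] [NormedSpace ℝ E] {f φ : ℝ → E} {t₁ t₂ : ℝ}

theorem intervalIntegrable_or_eqOn_of_sub_eq_integral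
    (h : ∀ s ∈ uIcc t₁ t₂, ∀ t ∈ uIcc t₁ t₂, f t - f s = ∫ q in s..t, φ q) :
    IntervalIntegrable φ volume t₁ t₂ ∨ ∀ t ∈ uIcc t₁ t₂, f t = f t₁ := by
  refine or_iff_not_imp_left.2 fun hφ t ht => ?_
  by_cases hφt : IntervalIntegrable φ volume t₁ t
  · have hφt₂ : ¬IntervalIntegrable φ volume t t₂ := fun h' => hφ (hφt.trans h')
    have h₁ := h t₁ left_mem_uIcc t₂ right_mem_uIcc
    have h₂ := h t ht t₂ right_mem_uIcc
    rw [intervalIntegral.integral_undef hφ, sub_eq_zero] at h₁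
    rw [intervalIntegral.integral_undef hφt₂, sub_eq_zero] at h₂
    rw [← h₂, h₁]
  · have h₁ := h t₁ left_mem_uIcc t ht
    rwa [intervalIntegral.integral_undef hφt, sub_eq_zero] at h₁

theorem ae_hasDerivAt_of_sub_eq_integral [CompleteSpace E]
    (hφ : IntervalIntegrable φ volume t₁ t₂)
    (h : ∀ s ∈ uIcc t₁ t₂, ∀ t ∈ uIcc t₁ t₂, f t - f s = ∫ q in s..t, φ q) :
    ∀ᵐ t, t ∈ uIcc t₁ t₂ → HasDerivAt f (φ t) t := by
  filter_upwards [hφ.ae_hasDerivAt_integral, Measure.ae_ne volume t₁, Measure.ae_ne volume t₂]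
    with t hderiv ht₁ ht₂ ht
  refine ((hderiv ht t₁ left_mem_uIcc).const_add (f t₁)).congr_of_eventuallyEq ?_
  filter_upwards [uIcc_mem_nhds ht ht₁ ht₂] with s hs
  rw [← h t₁ left_mem_uIcc s hs, add_sub_cancel]

end Primitive

theorem absolutelyContinuousOnInterval_of_sub_eq_integral {f φ : ℝ → ℝ} {t₁ t₂ : ℝ}
    (hφ : IntervalIntegrable φ volume t₁ t₂)
    (h : ∀ s ∈ uIcc t₁ t₂, ∀ t ∈ uIcc t₁ t₂, f t - f s = ∫ q in s..t, φ q) :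
    AbsolutelyContinuousOnInterval f t₁ t₂ := by
  refine .of_dist_le_sum {()} (f := fun _ s => ∫ q in t₁..s, φ q)
    (by simpa using hφ.absolutelyContinuousOnInterval_intervalIntegral left_mem_uIcc)
    fun s hs t ht => ?_
  rw [Finset.sum_singleton, Real.dist_eq, Real.dist_eq, ← h t₁ left_mem_uIcc s hs,
    ← h t₁ left_mem_uIcc t ht, sub_sub_sub_cancel_right]

section DualCurve

variable {V : Type*} [AddCommGroup V] [Module ℝ V]

theorem hasDerivAt_apply_of_forall_basis {ι : Type*} [Fintype ι] (b : Module.Basis ι ℝ V)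
    {a : ℝ → Module.Dual ℝ V} {a' : Module.Dual ℝ V} {t : ℝ}
    (h : ∀ i, HasDerivAt (fun s => a s (b i)) (a' (b i)) t) (v : V) :
    HasDerivAt (fun s => a s v) (a' v) t := by
  rw [show (fun s => a s v) = fun s => ∑ i, b.coord i v * a s (b i) from
    funext fun s => b.dual_apply_eq_sum_coord_mul (a s) v, b.dual_apply_eq_sum_coord_mul a' v]
  exact HasDerivAt.fun_sum fun i _ => (h i).const_mul _

variable [FiniteDimensional ℝ V] {a : ℝ → Module.Dual ℝ V} {t₁ t₂ : ℝ}

theorem ae_hasDerivAt_apply_of_sub_eq_integral {A : ℝ → Module.Dual ℝ V}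
    (hA : ∀ x, IntervalIntegrable (fun s => A s x) volume t₁ t₂)
    (h : ∀ x, ∀ s ∈ uIcc t₁ t₂, ∀ t ∈ uIcc t₁ t₂, a t x - a s x = ∫ q in s..t, A q x) :
    ∀ᵐ t, t ∈ uIcc t₁ t₂ → ∀ v, HasDerivAt (fun s => a s v) (A t v) t := by
  let b := Module.finBasis ℝ V
  filter_upwards [ae_all_iff.2 fun i => ae_hasDerivAt_of_sub_eq_integral (hA (b i)) (h (b i))]
    with t hderiv ht v
  exact hasDerivAt_apply_of_forall_basis b (fun i => hderiv i ht) v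

theorem absolutelyContinuousOnInterval_dualNorm_comp {F : V → ℝ} (hF : IsAsymNorm F)
    {Fstar : Module.Dual ℝ V → ℝ} (hFstar : IsDualNorm F Fstar)
    (ha : ∀ x, AbsolutelyContinuousOnInterval (fun s => a s x) t₁ t₂) :
    AbsolutelyContinuousOnInterval (fun s => Fstar (a s)) t₁ t₂ := by
  let b := Module.finBasis ℝ V
  let κ i := Fstar (b.coord i) + Fstar (-b.coord i)
  have hκ i : 0 ≤ κ i := add_nonneg (hF.dualNorm_nonneg hFstar _) (hF.dualNorm_nonneg hFstar _)
  refine .of_dist_le_sum Finset.univ (f := fun i s => κ i * a s (b i))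
    (fun i _ => (ha (b i)).const_mul (κ i)) fun s _ t _ => ?_
  have hdist i : dist (κ i * a s (b i)) (κ i * a t (b i)) = κ i * |a s (b i) - a t (b i)| := by
    rw [Real.dist_eq, ← mul_sub, abs_mul, abs_of_nonneg (hκ i)]
  simp only [hdist]
  rw [Real.dist_eq, abs_sub_le_iff]
  constructor
  · exact hF.dualNorm_sub_le_sum_basis hFstar b (a s) (a t)
  · simpa only [abs_sub_comm] using hF.dualNorm_sub_le_sum_basis hFstar b (a t) (a s)

end DualCurve

theorem dualNorm_eq_of_intervalIntegrable {g : Type*} [LieRing g] [LieAlgebra ℝ g]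
    [FiniteDimensional ℝ g] {F : g → ℝ} (hF : IsAsymNorm F)
    {Fstar : Module.Dual ℝ g → ℝ} (hFstar : IsDualNorm F Fstar)
    {a : ℝ → Module.Dual ℝ g} {u : ℝ → g} {t₁ t₂ : ℝ}
    (hint : ∀ x, IntervalIntegrable (fun s => -(a s ⁅u s, x⁆)) volume t₁ t₂)
    (hAC : ∀ x, ∀ s ∈ uIcc t₁ t₂, ∀ t ∈ uIcc t₁ t₂,
      a t x - a s x = ∫ q in s..t, -(a q ⁅u q, x⁆))
    (hmax : ∀ᵐ t, t ∈ uIcc t₁ t₂ → F (u t) = 1 ∧ ∀ v, F v = 1 → a t v ≤ a t (u t)) :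
    Fstar (a t₁) = Fstar (a t₂) := by
  have hac := absolutelyContinuousOnInterval_dualNorm_comp hF hFstar fun x =>
    absolutelyContinuousOnInterval_of_sub_eq_integral (hint x) (hAC x)
  have hderiv := ae_hasDerivAt_apply_of_sub_eq_integral
    (A := fun t => -((a t).comp (LieAlgebra.ad ℝ g (u t)))) hint hAC
  obtain ⟨C, hC⟩ := hac.const_of_ae_hasDerivAt_zero <| by
    filter_upwards [hac.ae_differentiableAt, hderiv, hmax] with t hdiff hderiv hmax ht
    obtain ⟨hu, hmax⟩ := hmax ht
    refine (hdiff ht).hasDerivAt_of_eventually_le (φ := fun s => a s (u t)) ?_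
      (Eventually.of_forall fun s => ?_) (hF.dualNorm_eq_apply_of_isMax hFstar hu hmax).symm
    · simpa using hderiv ht (u t)
    · simpa [hu] using hF.apply_le_dualNorm_mul hFstar (a s) (u t)
  rw [hC t₁ left_mem_uIcc, hC t₂ right_mem_uIcc]

theorem dual_norm_constant_along_extremal_general
    {g : Type*} [LieRing g] [LieAlgebra ℝ g] [FiniteDimensional ℝ g]
    (I : Set ℝ) (hI : I.OrdConnected)
    (a : ℝ → Module.Dual ℝ g) (u : ℝ → g)
    (F : g → ℝ) (hF : IsAsymNorm F)
    (Fstar : Module.Dual ℝ g → ℝ)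
    (hFstar : ∀ ξ : Module.Dual ℝ g,
      IsGreatest {r | ∃ v, F v ≤ 1 ∧ ξ v = r} (Fstar ξ))
    (hAC : ∀ x : g, ∀ t₀ ∈ I, ∀ t ∈ I,
      a t x - a t₀ x = ∫ s in t₀..t, -(a s ⁅u s, x⁆))
    (hmax : ∀ᵐ t ∂volume, t ∈ I →
      (F (u t) = 1 ∧ ∀ v : g, F v = 1 → a t v ≤ a t (u t))) :
    ∀ t₁ ∈ I, ∀ t₂ ∈ I, Fstar (a t₁) = Fstar (a t₂) := by
  intro t₁ ht₁ t₂ ht₂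
  have hsub := hI.uIcc_subset ht₁ ht₂
  have hAC' : ∀ x, ∀ s ∈ uIcc t₁ t₂, ∀ t ∈ uIcc t₁ t₂,
      a t x - a s x = ∫ q in s..t, -(a q ⁅u q, x⁆) :=
    fun x s hs t ht => hAC x s (hsub hs) t (hsub ht)
  -- The integral of a non-integrable function is `0`, so a coordinate `s ↦ a s x` whose
  -- right-hand side is not integrable is constant; both alternatives are closed under `-`.
  rcases forall_or_forall_of_sub_closed
      (P := fun x => IntervalIntegrable (fun s => -(a s ⁅u s, x⁆)) volume t₁ t₂)
      (Q := fun x => ∀ t ∈ uIcc t₁ t₂, a t x = a t₁ x)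
      (fun x y hx hy => by simpa only [lie_sub, map_sub, neg_sub_neg, neg_sub] using hx.sub hy)
      (fun x y hx hy t ht => by simp only [map_sub, hx t ht, hy t ht])
      (fun x => intervalIntegrable_or_eqOn_of_sub_eq_integral (hAC' x)) with hint | hconst
  · exact dualNorm_eq_of_intervalIntegrable hF hFstar hint hAC' <| by
      filter_upwards [hmax] with t ht ht' using ht (hsub ht')
  · rw [LinearMap.ext fun x => hconst x t₂ right_mem_uIcc]

/-- Along an absolutely continuous solution of the Euler–Arnold equation
`a'(t) = -ad*(u(t))(a(t))` whose control `u(t)` maximizes `a(t)` on the unit sphere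
of a continuous asymmetric norm `F` a.e., the dual norm `F*(a(t))` is constant. -/
theorem dual_norm_constant_along_extremal
    {g : Type*} [LieRing g] [LieAlgebra ℝ g] [FiniteDimensional ℝ g]
    [TopologicalSpace g] [IsTopologicalAddGroup g] [ContinuousSMul ℝ g] [T2Space g]
    [MeasurableSpace g]
    (I : Set ℝ) (hI : I.OrdConnected)
    (a : ℝ → Module.Dual ℝ g) (u : ℝ → g) (hu : Measurable u)
    (F : g → ℝ) (hFc : Continuous F) (hF : IsAsymNorm F)
    (hub : ∃ C : ℝ, ∀ t ∈ I, F (u t) ≤ C)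
    (Fstar : Module.Dual ℝ g → ℝ)
    (hFstar : ∀ ξ : Module.Dual ℝ g,
      IsGreatest {r | ∃ v, F v ≤ 1 ∧ ξ v = r} (Fstar ξ))
    (hAC : ∀ x : g, ∀ t₀ ∈ I, ∀ t ∈ I,
      a t x - a t₀ x = ∫ s in t₀..t, -(a s ⁅u s, x⁆))
    (hmax : ∀ᵐ t ∂volume, t ∈ I →
      (F (u t) = 1 ∧ ∀ v : g, F v = 1 → a t v ≤ a t (u t))) :
    ∀ t₁ ∈ I, ∀ t₂ ∈ I, Fstar (a t₁) = Fstar (a t₂) :=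
  dual_norm_constant_along_extremal_general I hI a u F hF Fstar hFstar hAC hmax
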